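/- Let s and x be paravectors in the Clifford algebra ℝₙ such that x ∉ [s]. Then (s² − 2Re(x)s + |x|²)^{-1}(s − x̄) = −(x − s̄)(x² − 2Re(s)x + |s|²)^{-1}. -/
import Mathlib


/-- The negative-definite quadratic form on `ℝⁿ`, so that
`CliffordAlgebra (QnegDef n)` is the real Clifford algebra `ℝₙ` with
`eᵢeⱼ + eⱼeᵢ = -2δᵢⱼ`. -/
noncomputable abbrev QnegDef (n : ℕ) : QuadraticForm ℝ (Fin n → ℝ) :=
  QuadraticMap.weightedSumSquares ℝ (fun _ : Fin n => (-1 : ℝ))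

/-- The paravector `x₀ + ∑ xᵢ eᵢ` in the Clifford algebra `ℝₙ`. -/
noncomputable def paravec (n : ℕ) (x0 : ℝ) (v : Fin n → ℝ) : CliffordAlgebra (QnegDef n) :=
  algebraMap ℝ _ x0 + CliffordAlgebra.ι (QnegDef n) v

/-- The conjugate paravector `x₀ - ∑ xᵢ eᵢ`. -/
noncomputable def paraconj (n : ℕ) (x0 : ℝ) (v : Fin n → ℝ) : CliffordAlgebra (QnegDef n) :=
  algebraMap ℝ _ x0 - CliffordAlgebra.ι (QnegDef n) v

/-- Abstract central identity: if `X, S` commute with everything in sight and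
`a², b²` are central, then the two kernel numerator/denominator products agree. -/
lemma abstract_key {R : Type*} [Ring R] (X S a b : R)
    (hXa : X * a = a * X) (hXb : X * b = b * X)
    (hSa : S * a = a * S) (hSb : S * b = b * S) (hSX : S * X = X * S)
    (hab : b * (a * a) = a * a * b) (hba : a * (b * b) = b * b * a) :
    ((S + b) - (X - a)) * ((X + a) * (X + a) - 2 * S * (X + a) + (S * S - b * b)) =
      -(((S + b) * (S + b) - 2 * X * (S + b) + (X * X - a * a)) * ((X + a) - (S - b))) := by
  have c1 : ∀ r, a * (X * r) = X * (a * r) := fun r => by rw [← mul_assoc, ← hXa, mul_assoc]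
  have c2 : ∀ r, b * (X * r) = X * (b * r) := fun r => by rw [← mul_assoc, ← hXb, mul_assoc]
  have c3 : ∀ r, a * (S * r) = S * (a * r) := fun r => by rw [← mul_assoc, ← hSa, mul_assoc]
  have c4 : ∀ r, b * (S * r) = S * (b * r) := fun r => by rw [← mul_assoc, ← hSb, mul_assoc]
  have c5 : ∀ r, S * (X * r) = X * (S * r) := fun r => by rw [← mul_assoc, hSX, mul_assoc]
  have d1 : ∀ r, b * (a * (a * r)) = a * (a * (b * r)) := fun r => by
    rw [← mul_assoc a a r, ← mul_assoc b, hab, mul_assoc, mul_assoc]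
  have d2 : ∀ r, a * (b * (b * r)) = b * (b * (a * r)) := fun r => by
    rw [← mul_assoc b b r, ← mul_assoc a, hba, mul_assoc, mul_assoc]
  noncomm_ring [hXa.symm, hXb.symm, hSa.symm, hSb.symm, hSX, hab, hba, c1, c2, c3, c4, c5, d1, d2]

lemma ι_sq (n : ℕ) (v : Fin n → ℝ) :
    CliffordAlgebra.ι (QnegDef n) v * CliffordAlgebra.ι (QnegDef n) v
      = algebraMap ℝ _ (-(∑ i, v i ^ 2)) := by
  rw [CliffordAlgebra.ι_sq_scalar]
  congr 1
  simp [QuadraticMap.weightedSumSquares_apply, sq]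

/-- The central identity in the Clifford algebra. -/
lemma key (n : ℕ) (x0 s0 : ℝ) (v w : Fin n → ℝ) :
    (paravec n s0 w - paraconj n x0 v) *
      (paravec n x0 v * paravec n x0 v - (2 * s0) • paravec n x0 v +
        algebraMap ℝ _ (s0 ^ 2 + ∑ i, w i ^ 2)) =
    -((paravec n s0 w * paravec n s0 w - (2 * x0) • paravec n s0 w +
        algebraMap ℝ _ (x0 ^ 2 + ∑ i, v i ^ 2)) * (paravec n x0 v - paraconj n s0 w)) := by
  set a := CliffordAlgebra.ι (QnegDef n) v with ha_def
  set b := CliffordAlgebra.ι (QnegDef n) w with hb_def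
  set X := algebraMap ℝ (CliffordAlgebra (QnegDef n)) x0 with hX_def
  set S := algebraMap ℝ (CliffordAlgebra (QnegDef n)) s0 with hS_def
  have ha : a * a = algebraMap ℝ _ (-(∑ i, v i ^ 2)) := ι_sq n v
  have hb : b * b = algebraMap ℝ _ (-(∑ i, w i ^ 2)) := ι_sq n w
  have hab : b * (a * a) = a * a * b := by
    rw [ha]; exact (Algebra.commutes _ _).symm
  have hba : a * (b * b) = b * b * a := by
    rw [hb]; exact (Algebra.commutes _ _).symm
  have e1 : algebraMap ℝ (CliffordAlgebra (QnegDef n)) (s0 ^ 2 + ∑ i, w i ^ 2)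
      = S * S - b * b := by
    rw [hb, map_add, hS_def, ← map_mul, map_neg, sub_neg_eq_add, sq]
  have e2 : algebraMap ℝ (CliffordAlgebra (QnegDef n)) (x0 ^ 2 + ∑ i, v i ^ 2)
      = X * X - a * a := by
    rw [ha, map_add, hX_def, ← map_mul, map_neg, sub_neg_eq_add, sq]
  have e3 : ∀ y : CliffordAlgebra (QnegDef n), (2 * s0) • y = 2 * S * y := fun y => by
    rw [Algebra.smul_def, map_mul, hS_def, map_ofNat]
  have e4 : ∀ y : CliffordAlgebra (QnegDef n), (2 * x0) • y = 2 * X * y := fun y => by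
    rw [Algebra.smul_def, map_mul, hX_def, map_ofNat]
  simp only [paravec, paraconj, ← ha_def, ← hb_def, ← hX_def, ← hS_def, e1, e2, e3, e4]
  exact abstract_key X S a b (Algebra.commutes _ _) (Algebra.commutes _ _)
    (Algebra.commutes _ _) (Algebra.commutes _ _) (Algebra.commutes _ _) hab hba

/-- Identity of the two forms of the right slice-monogenic Cauchy kernel:
for paravectors `x = x₀ + v`, `s = s₀ + w` with both quadratic elements invertible
(`u1` a two-sided inverse of `x² - 2 Re(s) x + |s|²` and `u2` a two-sided inverse of
`s² - 2 Re(x) s + |x|²`), one has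
`(s² - 2 Re(x) s + |x|²)⁻¹ (s - x̄) = -(x - s̄)(x² - 2 Re(s) x + |s|²)⁻¹`. -/
theorem right_cauchy_kernel_form_I_eq_form_II (n : ℕ) (x0 s0 : ℝ) (v w : Fin n → ℝ)
    (u1 u2 : CliffordAlgebra (QnegDef n))
    (h1a : (paravec n x0 v * paravec n x0 v - (2 * s0) • paravec n x0 v +
        algebraMap ℝ _ (s0 ^ 2 + ∑ i, w i ^ 2)) * u1 = 1)
    (h1b : u1 * (paravec n x0 v * paravec n x0 v - (2 * s0) • paravec n x0 v +
        algebraMap ℝ _ (s0 ^ 2 + ∑ i, w i ^ 2)) = 1)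
    (h2a : (paravec n s0 w * paravec n s0 w - (2 * x0) • paravec n s0 w +
        algebraMap ℝ _ (x0 ^ 2 + ∑ i, v i ^ 2)) * u2 = 1)
    (h2b : u2 * (paravec n s0 w * paravec n s0 w - (2 * x0) • paravec n s0 w +
        algebraMap ℝ _ (x0 ^ 2 + ∑ i, v i ^ 2)) = 1) :
    u2 * (paravec n s0 w - paraconj n x0 v) =
      -((paravec n x0 v - paraconj n s0 w) * u1) := by
  set A := paravec n x0 v * paravec n x0 v - (2 * s0) • paravec n x0 v +
      algebraMap ℝ (CliffordAlgebra (QnegDef n)) (s0 ^ 2 + ∑ i, w i ^ 2) with hA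
  set B := paravec n s0 w * paravec n s0 w - (2 * x0) • paravec n s0 w +
      algebraMap ℝ (CliffordAlgebra (QnegDef n)) (x0 ^ 2 + ∑ i, v i ^ 2) with hB
  have hk := key n x0 s0 v w
  calc u2 * (paravec n s0 w - paraconj n x0 v)
      = u2 * ((paravec n s0 w - paraconj n x0 v) * (A * u1)) := by rw [h1a, mul_one]
    _ = u2 * (((paravec n s0 w - paraconj n x0 v) * A) * u1) := by rw [mul_assoc]
    _ = u2 * ((-(B * (paravec n x0 v - paraconj n s0 w))) * u1) := by rw [hk]
    _ = -((u2 * B) * ((paravec n x0 v - paraconj n s0 w) * u1)) := by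
        rw [neg_mul, mul_neg, mul_assoc, mul_assoc]
    _ = -((paravec n x0 v - paraconj n s0 w) * u1) := by rw [h2b, one_mul]
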